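/- Let G be a finite group and let (𝒳,𝒦) and (𝒴,𝓛) be supercharacter theories of G. Then 𝒳 ≤ 𝒴 in the lattice of partitions of Irr(G) if and only if 𝒦 ≤ 𝓛 in the lattice of partitions of G. -/

import Mathlib

open scoped Classical

noncomputable section

/-- The set of irreducible complex characters of `G`. -/
def Irr (G : Type) [Group G] : Set (G → ℂ) :=
  {χ | ∃ V : FDRep ℂ G, CategoryTheory.Simple V ∧ FDRep.character V = χ}

/-- `σ_X = ∑_{ψ ∈ X} ψ(1)·ψ`. -/
def sigmaChar {G : Type} [Group G] (X : Set (G → ℂ)) : G → ℂ :=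
  fun g => ∑ᶠ ψ ∈ X, ψ 1 * ψ g

/-- `P` is a set partition of the set `S`. -/
def IsPartitionOf {α : Type*} (S : Set α) (P : Set (Set α)) : Prop :=
  ∅ ∉ P ∧ (∀ p ∈ P, p ⊆ S) ∧ ∀ a ∈ S, ∃! p, p ∈ P ∧ a ∈ p

/-- `(𝒳, 𝒦)` is a supercharacter theory of the finite group `G`. -/
def IsSCT (G : Type) [Group G] [Finite G]
    (𝒳 : Set (Set (G → ℂ))) (𝒦 : Set (Set G)) : Prop :=
  IsPartitionOf (Irr G) 𝒳 ∧ IsPartitionOf Set.univ 𝒦 ∧ 𝒳.ncard = 𝒦.ncard ∧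
    ({1} : Set G) ∈ 𝒦 ∧
    ∀ X ∈ 𝒳, ∀ K ∈ 𝒦, ∀ g ∈ K, ∀ h ∈ K, sigmaChar X g = sigmaChar X h

/-- `K̂ = ∑_{g ∈ K} g ∈ ℂ[G]`. -/
def ghat {G : Type} [Group G] (K : Set G) : MonoidAlgebra ℂ G :=
  ∑ᶠ g ∈ K, MonoidAlgebra.single g (1 : ℂ)

/-- The central idempotent `e_χ = (χ(1)/|G|) ∑_g conj(χ g)·g` attached to a character. -/
def eIdem (G : Type) [Group G] (χ : G → ℂ) : MonoidAlgebra ℂ G :=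
  (χ 1 / (Nat.card G : ℂ)) •
    ∑ᶠ g : G, (starRingEnd ℂ) (χ g) • MonoidAlgebra.single g (1 : ℂ)

/-- `f_X = ∑_{ψ ∈ X} e_ψ`. -/
def fIdem (G : Type) [Group G] (X : Set (G → ℂ)) : MonoidAlgebra ℂ G :=
  ∑ᶠ χ ∈ X, eIdem G χ

/-- Partition order: every part of `P` lies in some part of `Q`. -/
def PartLE {α : Type*} (P Q : Set (Set α)) : Prop := ∀ p ∈ P, ∃ q ∈ Q, p ⊆ q

/-- The join of two partitions of the same set: parts are connected components of
the relation "lying in a common part of `P` or of `Q`". -/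
def PartJoin {α : Type*} (P Q : Set (Set α)) : Set (Set α) :=
  {C | ∃ a ∈ ⋃₀ P, C = {b | Relation.ReflTransGen
      (fun x y => (∃ p ∈ P, x ∈ p ∧ y ∈ p) ∨ ∃ q ∈ Q, x ∈ q ∧ y ∈ q) a b}}

/-- Inner product of complex-valued functions on a finite group. -/
def cInner (H : Type) [Group H] (α β : H → ℂ) : ℂ :=
  (Nat.card H : ℂ)⁻¹ * ∑ᶠ h : H, α h * (starRingEnd ℂ) (β h)

/-- Restriction of a function on `G` to a subgroup. -/
def resChar {G : Type} [Group G] (H : Subgroup G) (χ : G → ℂ) : ↥H → ℂ := fun h => χ ↑h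

/-- Extension by zero of a function on a subgroup. -/
def zeroExtend {G : Type} [Group G] (H : Subgroup G) (φ : ↥H → ℂ) : G → ℂ :=
  fun g => if h : g ∈ H then φ ⟨g, h⟩ else 0

/-- The induced class function `φ^G`. -/
def indChar {G : Type} [Group G] (H : Subgroup G) (φ : ↥H → ℂ) : G → ℂ :=
  fun g => (Nat.card ↥H : ℂ)⁻¹ * ∑ᶠ x : G, zeroExtend H φ (x⁻¹ * g * x)

/-- The superclass of `x` with respect to a partition `𝒦` of `G`. -/
def sclass {G : Type} [Group G] (𝒦 : Set (Set G)) (x : G) : Set G := ⋃₀ {K ∈ 𝒦 | x ∈ K}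

/-- Superinduction: `φ^{(G)}(x) = [G:H]·(1/|[x]|)·∑_{y ∈ [x]} φ⁰(y)`. -/
def superInd {G : Type} [Group G] (𝒦 : Set (Set G)) (H : Subgroup G) (φ : ↥H → ℂ) : G → ℂ :=
  fun x => (H.index : ℂ) * (((sclass 𝒦 x).ncard : ℂ))⁻¹ * ∑ᶠ y ∈ sclass 𝒦 x, zeroExtend H φ y

/-- A subgroup is `𝒞`-normal when it is a union of superclasses. -/
def CNormal {G : Type} [Group G] (𝒦 : Set (Set G)) (N : Subgroup G) : Prop :=
  ∃ T ⊆ 𝒦, (N : Set G) = ⋃₀ T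

/-- `Irr(G/N)` viewed inside `Irr(G)`: irreducible characters with `N` in their kernel. -/
def IrrOver {G : Type} [Group G] (N : Subgroup G) : Set (G → ℂ) :=
  {χ ∈ Irr G | ∀ n ∈ N, χ n = χ 1}

/-- The set of irreducible constituents of the restriction of `θ` to `N`. -/
def constituentsOn {G : Type} [Group G] (N : Subgroup G) (θ : G → ℂ) : Set (↥N → ℂ) :=
  {ψ ∈ Irr ↥N | cInner ↥N (resChar N θ) ψ ≠ 0}

/-- `Irr(G|ψ)`: irreducible characters of `G` lying over `ψ ∈ Irr(N)`. -/
def irrOverChar {G : Type} [Group G] (N : Subgroup G) (ψ : ↥N → ℂ) : Set (G → ℂ) :=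
  {χ ∈ Irr G | cInner ↥N (resChar N χ) ψ ≠ 0}

/-- `X^G = ⋃_{ψ ∈ X} Irr(G|ψ)` for `X ⊆ Irr(N)`. -/
def indSet {G : Type} [Group G] (N : Subgroup G) (X : Set (↥N → ℂ)) : Set (G → ℂ) :=
  ⋃ ψ ∈ X, irrOverChar N ψ

/-- Conjugation of a normal subgroup by a group element. -/
def conjSub {G : Type} [Group G] {N : Subgroup G} (hN : N.Normal) (g : G) (n : ↥N) : ↥N :=
  ⟨g * ↑n * g⁻¹, hN.conj_mem ↑n n.2 g⟩

/-- The conjugation action of `g ∈ G` on class functions of a normal subgroup `N`. -/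
def charConj {G : Type} [Group G] {N : Subgroup G} (hN : N.Normal) (g : G)
    (ψ : ↥N → ℂ) : ↥N → ℂ :=
  fun n => ψ (conjSub hN g⁻¹ n)

/-- Inflation of a set of characters of `G/N` to characters of `G`. -/
def inflateSet {G : Type} [Group G] (N : Subgroup G) [N.Normal]
    (Y : Set (G ⧸ N → ℂ)) : Set (G → ℂ) :=
  (fun η => η ∘ (QuotientGroup.mk : G → G ⧸ N)) '' Y

/-- Deflation of a set of characters of `G` (with `N` in their kernels) to characters
of `G/N`. -/
def deflate {G : Type} [Group G] (N : Subgroup G) [N.Normal]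
    (X : Set (G → ℂ)) : Set (G ⧸ N → ℂ) :=
  (fun χ => fun q : G ⧸ N => χ (Quotient.out q)) '' X

/-- The natural map `M → MN/N ≤ G/N`. -/
def projMN {G : Type} [Group G] (M N : Subgroup G) [N.Normal] (m : ↥M) :
    ↥(M.map (QuotientGroup.mk' N)) :=
  ⟨QuotientGroup.mk' N ↑m, Subgroup.mem_map_of_mem _ m.2⟩

end

/-!
Both partition orders become inclusions of spans. Call `Φ` biorthogonal to a family `F` on `S`
when the coordinate `Φ (F a) b` vanishes exactly when `a ≠ b`. For a partition `P` of a finite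
set `S` the block sums `∑_{a ∈ p} F a` are then linearly independent, and `P ≤ Q` iff every
`Q`-block sum lies in the span of the `P`-block sums: a coarse block sum is the sum of the fine
ones inside it, and conversely every vector of that span has `Φ`-coordinates proportional to the
diagonal ones `Φ (F a) a` on each part of `P`. The `σ_X` are the block sums of `ψ ↦ ψ(1) ψ` over
`Irr G`, with `Φ` the pairing `∑_g f(g) ψ(g⁻¹)` (biorthogonal by the orthogonality relations),
and the indicators of the parts of `𝒦` are the block sums of the point masses.

For a supercharacter theory `(𝒳, 𝒦)` each `σ_X` is constant on the parts of `𝒦`, so it lies in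
the span of their indicators; both families are linearly independent and `|𝒳| = |𝒦|`, so the
two spans coincide. Hence `𝒳 ≤ 𝒴 ↔ span σ_𝒴 ≤ span σ_𝒳 ↔ span 1_𝓛 ≤ span 1_𝒦 ↔ 𝒦 ≤ 𝓛`.
-/

namespace IsPartitionOf

variable {α : Type*} {S : Set α} {P : Set (Set α)}

theorem nonempty (hP : IsPartitionOf S P) {p : Set α} (hp : p ∈ P) : p.Nonempty :=
  Set.nonempty_iff_ne_empty.2 fun h => hP.1 (h ▸ hp)

theorem exists_mem (hP : IsPartitionOf S P) {a : α} (ha : a ∈ S) : ∃ p ∈ P, a ∈ p :=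
  (hP.2.2 a ha).exists

theorem eq_of_mem_of_mem (hP : IsPartitionOf S P) {p p' : Set α} (hp : p ∈ P) (hp' : p' ∈ P)
    {a : α} (ha : a ∈ p) (ha' : a ∈ p') : p = p' :=
  (hP.2.2 a (hP.2.1 p hp ha)).unique ⟨hp, ha⟩ ⟨hp', ha'⟩

theorem finite (hP : IsPartitionOf S P) (hS : S.Finite) : P.Finite :=
  hS.finite_subsets.subset hP.2.1

theorem finsum_mem_eq {M : Type*} [AddCommMonoid M] (hP : IsPartitionOf S P) (hS : S.Finite)
    (f : α → M) : ∑ᶠ a ∈ S, f a = ∑ᶠ p ∈ P, ∑ᶠ a ∈ p, f a := by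
  have hunion : ⋃₀ P = S := by
    refine Set.Subset.antisymm (Set.sUnion_subset hP.2.1) fun a ha => ?_
    obtain ⟨p, hp, hap⟩ := hP.exists_mem ha
    exact ⟨p, hp, hap⟩
  have hdisj : P.PairwiseDisjoint id := fun p hp p' hp' hne =>
    Set.disjoint_left.2 fun a ha ha' => hne (hP.eq_of_mem_of_mem hp hp' ha ha')
  rw [← hunion, finsum_mem_sUnion hdisj (hP.finite hS) fun p hp => hS.subset (hP.2.1 p hp)]

theorem sep_subset {Q : Set (Set α)} (hP : IsPartitionOf S P) (hQ : IsPartitionOf S Q)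
    (hle : PartLE P Q) {q : Set α} (hq : q ∈ Q) : IsPartitionOf q {p ∈ P | p ⊆ q} := by
  refine ⟨fun h => hP.1 h.1, fun p hp => hp.2, fun a ha => ?_⟩
  obtain ⟨p, hp, hap⟩ := hP.exists_mem (hQ.2.1 q hq ha)
  obtain ⟨q', hq', hpq'⟩ := hle p hp
  refine ⟨p, ⟨⟨hp, hQ.eq_of_mem_of_mem hq' hq (hpq' hap) ha ▸ hpq'⟩, hap⟩, ?_⟩
  rintro p' ⟨⟨hp', -⟩, hap'⟩
  exact hP.eq_of_mem_of_mem hp' hp hap' hap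

end IsPartitionOf

section PartSum

open Submodule

variable {k M α : Type*} [CommRing k] [AddCommGroup M] [Module k M]

noncomputable def partSum (F : α → M) (p : Set α) : M := ∑ᶠ a ∈ p, F a

theorem finsum_mem_smul_mem_span_partSum {F : α → M} {S : Set α} {P : Set (Set α)}
    (hS : S.Finite) (hP : IsPartitionOf S P) {c : α → k}
    (hc : ∀ p ∈ P, ∀ a ∈ p, ∀ b ∈ p, c a = c b) :
    ∑ᶠ a ∈ S, c a • F a ∈ span k (partSum F '' P) := by
  rw [hP.finsum_mem_eq hS]
  refine finsum_mem_induction (· ∈ span k _) (zero_mem _) (fun _ _ => add_mem) fun p hp => ?_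
  obtain ⟨a, ha⟩ := hP.nonempty hp
  have hfactor : ∑ᶠ b ∈ p, c b • F b = c a • partSum F p := by
    calc ∑ᶠ b ∈ p, c b • F b = ∑ᶠ b ∈ p, c a • F b :=
          finsum_mem_congr rfl fun b hb => by rw [hc p hp b hb a ha]
      _ = c a • partSum F p :=
          ((smulAddHom k M (c a)).map_finsum_mem F (hS.subset (hP.2.1 p hp))).symm
  exact hfactor ▸ smul_mem _ _ (subset_span ⟨p, hp, rfl⟩)

def IsBiorthogonalOn (Φ : M →ₗ[k] α → k) (F : α → M) (S : Set α) : Prop :=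
  ∀ a ∈ S, ∀ b ∈ S, Φ (F a) b ≠ 0 ↔ a = b

namespace IsBiorthogonalOn

variable {F : α → M} {Φ : M →ₗ[k] α → k} {S : Set α}

theorem linearIndepOn [IsDomain k] (hΦ : IsBiorthogonalOn Φ F S) :
    LinearIndepOn k F S := by
  rw [LinearIndepOn, linearIndependent_iff']
  intro t c hsum i hi
  have hcoord := congrFun (congrArg Φ hsum) i
  simp only [map_sum, map_smul, map_zero, Finset.sum_apply, Pi.smul_apply, smul_eq_mul,
    Pi.zero_apply] at hcoord
  rw [Finset.sum_eq_single i (fun j _ hji => by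
      rw [not_ne_iff.1 (mt (hΦ j j.2 i i.2).1 (Subtype.coe_ne_coe.2 hji)), mul_zero])
    (absurd hi)] at hcoord
  exact (mul_eq_zero.1 hcoord).resolve_right ((hΦ i i.2 i i.2).2 rfl)

theorem apply_partSum (hΦ : IsBiorthogonalOn Φ F S) (hS : S.Finite) {p : Set α} (hp : p ⊆ S)
    {b : α} (hb : b ∈ S) :
    Φ (partSum F p) b = if b ∈ p then Φ (F b) b else 0 := by
  have hmap := ((LinearMap.proj b).comp Φ).toAddMonoidHom.map_finsum_mem F (hS.subset hp)
  simp only [LinearMap.toAddMonoidHom_coe, LinearMap.coe_comp, Function.comp_apply,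
    LinearMap.coe_proj, Function.eval] at hmap
  rw [partSum, hmap, finsum_mem_def, finsum_eq_single _ b fun a hab => ?_]
  · exact Set.indicator_apply p _ b
  · by_cases ha : a ∈ p
    · rw [Set.indicator_of_mem ha, not_ne_iff.1 (mt (hΦ a (hp ha) b hb).1 hab)]
    · exact Set.indicator_of_notMem ha _

theorem linearIndepOn_partSum [IsDomain k] (hΦ : IsBiorthogonalOn Φ F S) {P : Set (Set α)}
    (hS : S.Finite) (hP : IsPartitionOf S P) :
    LinearIndepOn k (partSum F) P := by
  -- evaluate the coordinates `Φ` at one representative of each part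
  refine IsBiorthogonalOn.linearIndepOn
    (Φ := LinearMap.pi fun p => if h : p.Nonempty then (LinearMap.proj h.some).comp Φ else 0)
    fun p hp p' hp' => ?_
  have hrep := (hP.nonempty hp').some_mem
  simp only [LinearMap.pi_apply, dif_pos (hP.nonempty hp'), LinearMap.coe_comp,
    Function.comp_apply, LinearMap.coe_proj, Function.eval]
  rw [hΦ.apply_partSum hS (hP.2.1 p hp) (hP.2.1 p' hp' hrep)]
  split_ifs with h
  · exact iff_of_true ((hΦ _ (hP.2.1 p' hp' hrep) _ (hP.2.1 p' hp' hrep)).2 rfl)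
      (hP.eq_of_mem_of_mem hp hp' h hrep)
  · exact iff_of_false (not_not.2 rfl) fun hpp' => h (hpp' ▸ hrep)

theorem finrank_span_partSum [IsDomain k] (hΦ : IsBiorthogonalOn Φ F S) {P : Set (Set α)}
    (hS : S.Finite) (hP : IsPartitionOf S P) :
    Module.finrank k (span k (partSum F '' P)) = P.ncard := by
  have := (hP.finite hS).fintype
  rw [Set.image_eq_range, finrank_span_eq_card (hΦ.linearIndepOn_partSum hS hP),
    ← Nat.card_eq_fintype_card, Nat.card_coe_set_eq]

theorem apply_mul_eq_of_mem_span (hΦ : IsBiorthogonalOn Φ F S) {P : Set (Set α)}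
    (hS : S.Finite) (hP : IsPartitionOf S P) {p : Set α} (hp : p ∈ P) {a b : α} (ha : a ∈ p)
    (hb : b ∈ p) {m : M} (hm : m ∈ span k (partSum F '' P)) :
    Φ m a * Φ (F b) b = Φ m b * Φ (F a) a := by
  have haS := hP.2.1 p hp ha
  have hbS := hP.2.1 p hp hb
  induction hm using span_induction with
  | mem x hx =>
    obtain ⟨p', hp', rfl⟩ := hx
    have hab : a ∈ p' ↔ b ∈ p' :=
      ⟨fun h => hP.eq_of_mem_of_mem hp' hp h ha ▸ hb,
        fun h => hP.eq_of_mem_of_mem hp' hp h hb ▸ ha⟩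
    rw [hΦ.apply_partSum hS (hP.2.1 p' hp') haS, hΦ.apply_partSum hS (hP.2.1 p' hp') hbS, hab]
    split_ifs <;> ring
  | zero => simp
  | add x y _ _ hx hy => simp only [map_add, Pi.add_apply, add_mul, hx, hy]
  | smul c x _ hx => simp only [map_smul, Pi.smul_apply, smul_eq_mul, mul_assoc, hx]

theorem partLE_iff_span_partSum_le [IsDomain k] (hΦ : IsBiorthogonalOn Φ F S)
    {P Q : Set (Set α)} (hS : S.Finite) (hP : IsPartitionOf S P) (hQ : IsPartitionOf S Q) :
    PartLE P Q ↔ span k (partSum F '' Q) ≤ span k (partSum F '' P) := by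
  constructor
  · intro hle
    rw [span_le]
    rintro _ ⟨q, hq, rfl⟩
    have hsum := finsum_mem_smul_mem_span_partSum (F := F) (c := fun _ => (1 : k))
      (hS.subset (hQ.2.1 q hq)) (hP.sep_subset hQ hle hq) fun _ _ _ _ _ _ => rfl
    simp only [one_smul] at hsum
    exact span_mono (Set.image_mono fun p hp => hp.1) hsum
  · intro hspan p hp
    obtain ⟨a, ha⟩ := hP.nonempty hp
    have haS := hP.2.1 p hp ha
    obtain ⟨q, hq, haq⟩ := hQ.exists_mem haS
    refine ⟨q, hq, fun b hb => ?_⟩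
    have hbS := hP.2.1 p hp hb
    have hq' := hΦ.apply_mul_eq_of_mem_span hS hP hp ha hb (hspan (subset_span ⟨q, hq, rfl⟩))
    rw [hΦ.apply_partSum hS (hQ.2.1 q hq) haS, hΦ.apply_partSum hS (hQ.2.1 q hq) hbS,
      if_pos haq] at hq'
    by_contra hbq
    rw [if_neg hbq, zero_mul] at hq'
    exact mul_ne_zero ((hΦ a haS a haS).2 rfl) ((hΦ b hbS b hbS).2 rfl) hq'

end IsBiorthogonalOn

end PartSum

theorem isBiorthogonalOn_id_single {k α : Type*} [CommRing k] [Nontrivial k] :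
    IsBiorthogonalOn (LinearMap.id : (α → k) →ₗ[k] α → k) (fun a => Pi.single a (1 : k))
      Set.univ := by
  intro a _ b _
  by_cases h : a = b <;> simp [h, eq_comm]

section Characters

open Submodule

variable {G : Type} [Group G]

theorem sigmaChar_eq_partSum {X : Set (G → ℂ)} (hX : X.Finite) :
    sigmaChar X = partSum (fun ψ => ψ 1 • ψ) X := by
  funext g
  exact ((Pi.evalAddMonoidHom (fun _ => ℂ) g).map_finsum_mem (fun ψ : G → ℂ => ψ 1 • ψ) hX).symm

variable [Fintype G]

theorem sum_mul_inv_of_mem_Irr {χ ψ : G → ℂ} (hχ : χ ∈ Irr G) (hψ : ψ ∈ Irr G) :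
    ∑ g, χ g * ψ g⁻¹ = if χ = ψ then (Fintype.card G : ℂ) else 0 := by
  have hcard : (Nat.card G : ℂ) ≠ 0 := Nat.cast_ne_zero.2 Nat.card_pos.ne'
  have : Invertible (Nat.card G : ℂ) := invertibleOfNonzero hcard
  have horth (V W : FDRep ℂ G) [CategoryTheory.Simple V] [CategoryTheory.Simple W] :
      ∑ g, V.character g * W.character g⁻¹ =
        if Nonempty (V ≅ W) then (Fintype.card G : ℂ) else 0 := by
    have h := FDRep.char_orthonormal V W
    rw [inv_mul_eq_iff_eq_mul₀ hcard] at h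
    rw [h, Nat.card_eq_fintype_card]
    split_ifs <;> simp
  obtain ⟨V, hV, rfl⟩ := hχ
  obtain ⟨W, hW, rfl⟩ := hψ
  rw [horth V W]
  by_cases hiso : Nonempty (V ≅ W)
  · rw [if_pos hiso, if_pos (FDRep.char_iso hiso.some)]
  · refine (if_neg hiso).trans (if_neg fun hchar => ?_).symm
    have hself := horth V V
    have hVW := horth V W
    rw [if_pos ⟨CategoryTheory.Iso.refl V⟩] at hself
    rw [if_neg hiso] at hVW
    rw [hchar] at hself hVW
    exact Fintype.card_ne_zero (Nat.cast_eq_zero.1 (hself.symm.trans hVW))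

theorem apply_one_ne_zero_of_mem_Irr {χ : G → ℂ} (hχ : χ ∈ Irr G) : χ 1 ≠ 0 := by
  have hsum := sum_mul_inv_of_mem_Irr hχ hχ
  rw [if_pos rfl] at hsum
  obtain ⟨V, hV, rfl⟩ := hχ
  intro hdim
  rw [FDRep.char_one, Nat.cast_eq_zero, Module.finrank_zero_iff] at hdim
  have hzero (g : G) : V.character g = 0 := by
    rw [FDRep.character, Subsingleton.elim (V.ρ g) 0, map_zero]
  simp only [hzero, zero_mul, Finset.sum_const_zero] at hsum
  exact Fintype.card_ne_zero (Nat.cast_eq_zero.1 hsum.symm)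

variable (G) in
noncomputable def charPairing : (G → ℂ) →ₗ[ℂ] (G → ℂ) → ℂ where
  toFun f ψ := ∑ g, f g * ψ g⁻¹
  map_add' f f' := by
    ext ψ
    simp only [Pi.add_apply, add_mul, Finset.sum_add_distrib]
  map_smul' c f := by
    ext ψ
    simp only [Pi.smul_apply, smul_eq_mul, RingHom.id_apply, Finset.mul_sum, mul_assoc]

theorem isBiorthogonalOn_charPairing {c : (G → ℂ) → ℂ} (hc : ∀ χ ∈ Irr G, c χ ≠ 0) :
    IsBiorthogonalOn (charPairing G) (fun χ => c χ • χ) (Irr G) := by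
  intro χ hχ ψ hψ
  change ∑ g, c χ * χ g * ψ g⁻¹ ≠ 0 ↔ χ = ψ
  simp only [mul_assoc, ← Finset.mul_sum, sum_mul_inv_of_mem_Irr hχ hψ]
  split_ifs with h
  · subst h
    simp [hc χ hχ]
  · simp [h]

theorem finite_Irr : (Irr G).Finite := by
  have h := (isBiorthogonalOn_charPairing (G := G) fun _ _ => one_ne_zero).linearIndepOn
  simp only [one_smul] at h
  exact h.set_finite_of_isNoetherian

theorem sigmaChar_image_eq {𝒳 : Set (Set (G → ℂ))} (h𝒳 : IsPartitionOf (Irr G) 𝒳) :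
    sigmaChar '' 𝒳 = partSum (fun ψ => ψ 1 • ψ) '' 𝒳 :=
  Set.image_congr fun X hX => sigmaChar_eq_partSum (finite_Irr.subset (h𝒳.2.1 X hX))

theorem partLE_iff_span_sigmaChar_le {𝒳 𝒴 : Set (Set (G → ℂ))}
    (h𝒳 : IsPartitionOf (Irr G) 𝒳) (h𝒴 : IsPartitionOf (Irr G) 𝒴) :
    PartLE 𝒳 𝒴 ↔ span ℂ (sigmaChar '' 𝒴) ≤ span ℂ (sigmaChar '' 𝒳) := by
  rw [sigmaChar_image_eq h𝒳, sigmaChar_image_eq h𝒴]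
  exact (isBiorthogonalOn_charPairing fun χ hχ => apply_one_ne_zero_of_mem_Irr hχ)
    |>.partLE_iff_span_partSum_le finite_Irr h𝒳 h𝒴

theorem span_sigmaChar_eq_span_partSum_single {𝒳 : Set (Set (G → ℂ))} {𝒦 : Set (Set G)}
    (h : IsSCT G 𝒳 𝒦) :
    span ℂ (sigmaChar '' 𝒳) = span ℂ (partSum (fun g => Pi.single g (1 : ℂ)) '' 𝒦) := by
  obtain ⟨h𝒳, h𝒦, hcard, -, hconst⟩ := h
  refine eq_of_le_of_finrank_eq (span_le.2 ?_) ?_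
  · rintro _ ⟨X, hX, rfl⟩
    have hexpand : ∑ᶠ g ∈ Set.univ, sigmaChar X g • Pi.single g (1 : ℂ) = sigmaChar X := by
      rw [finsum_mem_univ, finsum_eq_sum_of_fintype]
      ext g
      simp [Finset.sum_apply, Pi.single_apply]
    exact hexpand ▸ finsum_mem_smul_mem_span_partSum Set.finite_univ h𝒦 (hconst X hX)
  · rw [sigmaChar_image_eq h𝒳,
      (isBiorthogonalOn_charPairing fun χ hχ => apply_one_ne_zero_of_mem_Irr hχ)
        |>.finrank_span_partSum finite_Irr h𝒳,
      (isBiorthogonalOn_id_single (k := ℂ)).finrank_span_partSum Set.finite_univ h𝒦, hcard]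

end Characters

/-- Corollary 3.4. For supercharacter theories `(𝒳,𝒦)` and `(𝒴,𝓛)`
of `G`, `𝒳 ≤ 𝒴` in the partition lattice of `Irr(G)` iff `𝒦 ≤ 𝓛` in the partition
lattice of `G`. -/
theorem stmt6 (G : Type) [Group G] [Finite G]
    (𝒳 𝒴 : Set (Set (G → ℂ))) (𝒦 𝓛 : Set (Set G))
    (h1 : IsSCT G 𝒳 𝒦) (h2 : IsSCT G 𝒴 𝓛) :
    PartLE 𝒳 𝒴 ↔ PartLE 𝒦 𝓛 := by
  have := Fintype.ofFinite G
  rw [partLE_iff_span_sigmaChar_le h1.1 h2.1, span_sigmaChar_eq_span_partSum_single h1,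
    span_sigmaChar_eq_span_partSum_single h2]
  exact ((isBiorthogonalOn_id_single (k := ℂ)).partLE_iff_span_partSum_le Set.finite_univ
    h1.2.1 h2.2.1).symm
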